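/- Let Y be a right H-comodule (coaction ρ_Y(y) = y₍₀₎ ⊗ y₍₁₎) and X a left H-comodule (coaction ρ_X(x) = x₍₋₁₎ ⊗ x₍₀₎), and define ρ_R : Y ⊗ X → (Y ⊗ X) ⊗ H by ρ_R(y⊗x) = (y₍₀₎ ⊗ x₍₀₎) ⊗ y₍₁₎S(x₍₋₁₎). Then the cotensor product Y □_H X := ker((ρ_Y ⊗ id_X) − (id_Y ⊗ ρ_X)) ⊆ Y ⊗ X coincides with the invariant subspace (Y ⊗ X)^H := {ξ ∈ Y ⊗ X : ρ_R(ξ) = ξ ⊗ 1}. -/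
import Mathlib


/- STATEMENT 8: for a right `H`-comodule `Y` and a left `H`-comodule `X`, the cotensor
product `Y □_H X = ker((ρ_Y ⊗ id) - (id ⊗ ρ_X))` coincides with the invariant subspace
`(Y ⊗ X)^H = {ξ | ρ_R(ξ) = ξ ⊗ 1}` for `ρ_R(y ⊗ x) = (y₍₀₎ ⊗ x₍₀₎) ⊗ y₍₁₎·S(x₍₋₁₎)`. -/

open TensorProduct Coalgebra

noncomputable section

variable (k H Y X : Type) [Field k] [Ring H] [HopfAlgebra k H]
variable [AddCommGroup Y] [Module k Y] [AddCommGroup X] [Module k X]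

/-- `ρ_R(y ⊗ x) = (y₍₀₎ ⊗ x₍₀₎) ⊗ y₍₁₎·S(x₍₋₁₎)`. -/
def rhoYX (rY : Y →ₗ[k] Y ⊗[k] H) (rX : X →ₗ[k] H ⊗[k] X) :
    (Y ⊗[k] X) →ₗ[k] (Y ⊗[k] X) ⊗[k] H :=
  TensorProduct.map LinearMap.id (LinearMap.mul' k H) ∘ₗ
    (TensorProduct.tensorTensorTensorComm k Y H X H).toLinearMap ∘ₗ
    TensorProduct.map rY
      ((TensorProduct.comm k H X).toLinearMap ∘ₗ
        TensorProduct.map (HopfAlgebra.antipode (R := k) (A := H)) LinearMap.id ∘ₗ rX)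

namespace CotensorAux

variable {k H Y X}

/-- `x ↦ x₍₀₎ ⊗ S(x₍₋₁₎)` : the "twisted" right coaction built from a left coaction. -/
def rX' (rX : X →ₗ[k] H ⊗[k] X) : X →ₗ[k] X ⊗[k] H :=
  (TensorProduct.comm k H X).toLinearMap ∘ₗ
    TensorProduct.map (HopfAlgebra.antipode (R := k) (A := H)) LinearMap.id ∘ₗ rX

/-- `h ⊗ (x ⊗ h') ↦ x ⊗ (h·h')`. -/
def phim : H ⊗[k] (X ⊗[k] H) →ₗ[k] X ⊗[k] H :=
  TensorProduct.map LinearMap.id (LinearMap.mul' k H) ∘ₗ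
    (TensorProduct.assoc k X H H).toLinearMap ∘ₗ
    TensorProduct.map (TensorProduct.comm k H X).toLinearMap LinearMap.id ∘ₗ
    (TensorProduct.assoc k H X H).symm.toLinearMap

/-- `h ⊗ (x ⊗ h') ↦ (y ⊗ x) ⊗ (h·h')`. -/
def psim (y : Y) : H ⊗[k] (X ⊗[k] H) →ₗ[k] (Y ⊗[k] X) ⊗[k] H :=
  TensorProduct.map (TensorProduct.mk k Y X y) LinearMap.id ∘ₗ phim

attribute [local simp] TensorProduct.assoc_tmul TensorProduct.assoc_symm_tmul
  TensorProduct.comm_tmul TensorProduct.lid_tmul TensorProduct.mk_apply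
  LinearMap.mul'_apply TensorProduct.tensorTensorTensorComm_tmul
  TensorProduct.tmul_add TensorProduct.add_tmul TensorProduct.tmul_smul
  TensorProduct.smul_tmul'

lemma A1 (y : Y) (a : H) (t : X ⊗[k] H) :
    TensorProduct.map LinearMap.id (LinearMap.mul' k H)
      (TensorProduct.tensorTensorTensorComm k Y H X H ((y ⊗ₜ a) ⊗ₜ t)) =
    psim y (a ⊗ₜ t) := by
  induction t using TensorProduct.induction_on with
  | zero => simp [psim, phim]
  | tmul x' h' => simp [psim, phim]
  | add t1 t2 ih1 ih2 => simp only [tmul_add, map_add, ih1, ih2]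

lemma A2 (y : Y) (r' : X →ₗ[k] X ⊗[k] H) (s : H ⊗[k] X) :
    TensorProduct.map LinearMap.id (LinearMap.mul' k H)
      (TensorProduct.tensorTensorTensorComm k Y H X H
        (TensorProduct.map LinearMap.id r'
          ((TensorProduct.assoc k Y H X).symm (y ⊗ₜ s)))) =
    psim y (TensorProduct.map LinearMap.id r' s) := by
  induction s using TensorProduct.induction_on with
  | zero => simp
  | tmul a x' =>
      rw [show (TensorProduct.assoc k Y H X).symm (y ⊗ₜ (a ⊗ₜ x')) = (y ⊗ₜ a) ⊗ₜ x' from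
        TensorProduct.assoc_symm_tmul y a x']
      rw [show TensorProduct.map LinearMap.id r' ((y ⊗ₜ a) ⊗ₜ x' : (Y ⊗[k] H) ⊗[k] X) =
        (y ⊗ₜ a) ⊗ₜ (r' x') from TensorProduct.map_tmul _ _ _ _]
      rw [show TensorProduct.map LinearMap.id r' (a ⊗ₜ x' : H ⊗[k] X) = a ⊗ₜ (r' x') from
        TensorProduct.map_tmul _ _ _ _]
      exact A1 y a (r' x')
  | add s1 s2 ih1 ih2 => simp only [tmul_add, map_add, ih1, ih2]

lemma A3 (y : Y) (u : H ⊗[k] H) (x' : X) :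
    psim (X := X) y (TensorProduct.map LinearMap.id
        ((TensorProduct.comm k H X).toLinearMap ∘ₗ
          TensorProduct.map (HopfAlgebra.antipode (R := k) (A := H)) LinearMap.id)
      ((TensorProduct.assoc k H H X) (u ⊗ₜ x'))) =
    (y ⊗ₜ x') ⊗ₜ (LinearMap.mul' k H
      (TensorProduct.map LinearMap.id (HopfAlgebra.antipode (R := k) (A := H)) u)) := by
  induction u using TensorProduct.induction_on with
  | zero => simp
  | tmul a b => simp [psim, phim]
  | add u1 u2 ih1 ih2 => simp only [add_tmul, tmul_add, map_add, ih1, ih2]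

lemma A4 (y : Y) (s : H ⊗[k] X) :
    psim (X := X) y (TensorProduct.map LinearMap.id
        ((TensorProduct.comm k H X).toLinearMap ∘ₗ
          TensorProduct.map (HopfAlgebra.antipode (R := k) (A := H)) LinearMap.id)
      ((TensorProduct.assoc k H H X)
        (TensorProduct.map (comul (R := k)) LinearMap.id s))) =
    (y ⊗ₜ ((TensorProduct.lid k X)
      (TensorProduct.map (counit (R := k) (A := H)) LinearMap.id s))) ⊗ₜ (1 : H) := by
  induction s using TensorProduct.induction_on with
  | zero => simp
  | tmul a x' =>
      rw [show TensorProduct.map (comul (R := k)) LinearMap.id (a ⊗ₜ x' : H ⊗[k] X) =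
        (comul a) ⊗ₜ x' from TensorProduct.map_tmul _ _ _ _]
      rw [A3 y (comul a) x']
      have h1 : TensorProduct.map LinearMap.id (HopfAlgebra.antipode (R := k) (A := H))
          (comul a) = (HopfAlgebra.antipode (R := k) (A := H)).lTensor H (comul a) := rfl
      rw [h1, HopfAlgebra.mul_antipode_lTensor_comul_apply,
        Algebra.algebraMap_eq_smul_one]
      simp
  | add s1 s2 ih1 ih2 => simp only [map_add, tmul_add, add_tmul, ih1, ih2]

variable (rY : Y →ₗ[k] Y ⊗[k] H) (rX : X →ₗ[k] H ⊗[k] X)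

lemma KEY1
    (hXco : TensorProduct.map LinearMap.id rX ∘ₗ rX =
      (TensorProduct.assoc k H H X).toLinearMap ∘ₗ
        TensorProduct.map (comul (R := k)) LinearMap.id ∘ₗ rX)
    (hXcu : (TensorProduct.lid k X).toLinearMap ∘ₗ
        TensorProduct.map (counit (R := k) (A := H)) LinearMap.id ∘ₗ rX = LinearMap.id) :
    TensorProduct.map LinearMap.id (LinearMap.mul' k H) ∘ₗ
      (TensorProduct.tensorTensorTensorComm k Y H X H).toLinearMap ∘ₗ
      TensorProduct.map LinearMap.id (rX' rX) ∘ₗ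
      (TensorProduct.assoc k Y H X).symm.toLinearMap ∘ₗ
      TensorProduct.map LinearMap.id rX =
    (TensorProduct.mk k (Y ⊗[k] X) H).flip 1 := by
  apply TensorProduct.ext'
  intro y x
  have hco := LinearMap.congr_fun hXco x
  have hcu := LinearMap.congr_fun hXcu x
  simp only [LinearMap.comp_apply, LinearEquiv.coe_coe, LinearMap.id_apply] at hco hcu ⊢
  rw [show TensorProduct.map LinearMap.id rX (y ⊗ₜ x : Y ⊗[k] X) = y ⊗ₜ (rX x) from
    TensorProduct.map_tmul _ _ _ _]
  rw [A2 y (rX' rX) (rX x)]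
  have hdec : TensorProduct.map (LinearMap.id : H →ₗ[k] H) (rX' rX) =
      TensorProduct.map LinearMap.id
        ((TensorProduct.comm k H X).toLinearMap ∘ₗ
          TensorProduct.map (HopfAlgebra.antipode (R := k) (A := H)) LinearMap.id) ∘ₗ
      TensorProduct.map LinearMap.id rX := by
    rw [← TensorProduct.map_comp, LinearMap.id_comp]
    rfl
  rw [hdec, LinearMap.comp_apply, hco, A4 y (rX x), hcu]
  simp

/-- `x ⊗ h ↦ h·x₍₋₁₎ ⊗ x₍₀₎`. -/
def gm : X ⊗[k] H →ₗ[k] H ⊗[k] X :=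
  TensorProduct.map (LinearMap.mul' k H) LinearMap.id ∘ₗ
    (TensorProduct.assoc k H H X).symm.toLinearMap ∘ₗ
    TensorProduct.map LinearMap.id rX ∘ₗ (TensorProduct.comm k X H).toLinearMap

/-- `(y ⊗ x) ⊗ h ↦ y ⊗ (h·x₍₋₁₎ ⊗ x₍₀₎)`. -/
def Bm : (Y ⊗[k] X) ⊗[k] H →ₗ[k] Y ⊗[k] (H ⊗[k] X) :=
  TensorProduct.map LinearMap.id (gm rX) ∘ₗ (TensorProduct.assoc k Y X H).toLinearMap

lemma B1 (y : Y) (w : X ⊗[k] H) :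
    TensorProduct.assoc k Y X H
      (TensorProduct.map (TensorProduct.mk k Y X y) LinearMap.id w) = y ⊗ₜ w := by
  induction w using TensorProduct.induction_on with
  | zero => simp
  | tmul x' h => simp
  | add w1 w2 ih1 ih2 => simp only [map_add, tmul_add, ih1, ih2]

lemma B2 (y : Y) (v : H ⊗[k] (X ⊗[k] H)) :
    Bm rX (psim y v) = y ⊗ₜ (gm rX (phim v)) := by
  simp only [Bm, psim, LinearMap.comp_apply, LinearEquiv.coe_coe]
  rw [B1 y (phim v)]
  exact TensorProduct.map_tmul _ _ _ _

lemma B3 (h : H) (w : X ⊗[k] H) :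
    phim (h ⊗ₜ w) = TensorProduct.map LinearMap.id (LinearMap.mulLeft k h) w := by
  induction w using TensorProduct.induction_on with
  | zero => simp [phim]
  | tmul x' h' => simp [phim]
  | add w1 w2 ih1 ih2 => simp only [tmul_add, map_add, ih1, ih2]

lemma B4 (h : H) (s : H ⊗[k] X) :
    TensorProduct.map LinearMap.id (LinearMap.mulLeft k h)
      ((TensorProduct.comm k H X)
        (TensorProduct.map (HopfAlgebra.antipode (R := k) (A := H)) LinearMap.id s)) =
    TensorProduct.comm k H X
      (TensorProduct.map
        (LinearMap.mulLeft k h ∘ₗ HopfAlgebra.antipode (R := k) (A := H))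
        LinearMap.id s) := by
  induction s using TensorProduct.induction_on with
  | zero => simp
  | tmul a x' => simp
  | add s1 s2 ih1 ih2 => simp only [map_add, ih1, ih2]

lemma B5 (u : H ⊗[k] X) :
    TensorProduct.comm k X H (TensorProduct.comm k H X u) = u := by
  induction u using TensorProduct.induction_on with
  | zero => simp
  | tmul a x' => simp
  | add u1 u2 ih1 ih2 => simp only [map_add, ih1, ih2]

lemma B6 (f : H →ₗ[k] H) (s : H ⊗[k] X) :
    TensorProduct.map LinearMap.id rX
      (TensorProduct.map f LinearMap.id s) =
    TensorProduct.map f LinearMap.id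
      (TensorProduct.map LinearMap.id rX s) := by
  induction s using TensorProduct.induction_on with
  | zero => simp
  | tmul a x' => simp
  | add s1 s2 ih1 ih2 => simp only [map_add, ih1, ih2]

lemma B7 (h : H) (u : H ⊗[k] H) (x' : X) :
    TensorProduct.map (LinearMap.mul' k H) LinearMap.id
      ((TensorProduct.assoc k H H X).symm
        (TensorProduct.map
          (LinearMap.mulLeft k h ∘ₗ HopfAlgebra.antipode (R := k) (A := H))
          LinearMap.id
          ((TensorProduct.assoc k H H X) (u ⊗ₜ x')))) =
    TensorProduct.map
      (LinearMap.mulLeft k h ∘ₗ LinearMap.mul' k H ∘ₗ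
        TensorProduct.map (HopfAlgebra.antipode (R := k) (A := H)) LinearMap.id)
      LinearMap.id (u ⊗ₜ x') := by
  induction u using TensorProduct.induction_on with
  | zero => simp
  | tmul a b => simp [mul_assoc]
  | add u1 u2 ih1 ih2 => simp only [add_tmul, map_add, ih1, ih2]

lemma B9 (h : H) (s : H ⊗[k] X) :
    TensorProduct.map (LinearMap.mul' k H) LinearMap.id
      ((TensorProduct.assoc k H H X).symm
        (TensorProduct.map
          (LinearMap.mulLeft k h ∘ₗ HopfAlgebra.antipode (R := k) (A := H))
          LinearMap.id
          ((TensorProduct.assoc k H H X)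
            (TensorProduct.map (comul (R := k)) LinearMap.id s)))) =
    h ⊗ₜ ((TensorProduct.lid k X)
      (TensorProduct.map (counit (R := k) (A := H)) LinearMap.id s)) := by
  induction s using TensorProduct.induction_on with
  | zero => simp
  | tmul a x' =>
      rw [show TensorProduct.map (comul (R := k)) LinearMap.id (a ⊗ₜ x' : H ⊗[k] X) =
        (comul a) ⊗ₜ x' from TensorProduct.map_tmul _ _ _ _]
      rw [B7 h (comul a) x']
      rw [show TensorProduct.map
          (LinearMap.mulLeft k h ∘ₗ LinearMap.mul' k H ∘ₗ
            TensorProduct.map (HopfAlgebra.antipode (R := k) (A := H)) LinearMap.id)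
          LinearMap.id ((comul a) ⊗ₜ x' : (H ⊗[k] H) ⊗[k] X) =
        (LinearMap.mulLeft k h (LinearMap.mul' k H
          (TensorProduct.map (HopfAlgebra.antipode (R := k) (A := H)) LinearMap.id
            (comul a)))) ⊗ₜ x' from TensorProduct.map_tmul _ _ _ _]
      have h1 : TensorProduct.map (HopfAlgebra.antipode (R := k) (A := H)) LinearMap.id
          (comul a) = (HopfAlgebra.antipode (R := k) (A := H)).rTensor H (comul a) := rfl
      rw [h1, HopfAlgebra.mul_antipode_rTensor_comul_apply,
        Algebra.algebraMap_eq_smul_one]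
      simp [mul_smul_comm]
  | add s1 s2 ih1 ih2 => simp only [map_add, tmul_add, ih1, ih2]

lemma B8
    (hXco : TensorProduct.map LinearMap.id rX ∘ₗ rX =
      (TensorProduct.assoc k H H X).toLinearMap ∘ₗ
        TensorProduct.map (comul (R := k)) LinearMap.id ∘ₗ rX)
    (hXcu : (TensorProduct.lid k X).toLinearMap ∘ₗ
        TensorProduct.map (counit (R := k) (A := H)) LinearMap.id ∘ₗ rX = LinearMap.id)
    (h : H) (x : X) :
    gm rX (phim (h ⊗ₜ (rX' rX x))) = h ⊗ₜ x := by
  have hco := LinearMap.congr_fun hXco x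
  have hcu := LinearMap.congr_fun hXcu x
  simp only [LinearMap.comp_apply, LinearEquiv.coe_coe, LinearMap.id_apply] at hco hcu
  rw [B3]
  rw [show rX' rX x = (TensorProduct.comm k H X)
      (TensorProduct.map (HopfAlgebra.antipode (R := k) (A := H)) LinearMap.id (rX x))
    from rfl]
  rw [B4]
  simp only [gm, LinearMap.comp_apply, LinearEquiv.coe_coe]
  rw [B5, B6, hco, B9 h (rX x), hcu]

lemma B11
    (hXco : TensorProduct.map LinearMap.id rX ∘ₗ rX =
      (TensorProduct.assoc k H H X).toLinearMap ∘ₗ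
        TensorProduct.map (comul (R := k)) LinearMap.id ∘ₗ rX)
    (hXcu : (TensorProduct.lid k X).toLinearMap ∘ₗ
        TensorProduct.map (counit (R := k) (A := H)) LinearMap.id ∘ₗ rX = LinearMap.id)
    (x : X) (t : Y ⊗[k] H) :
    Bm rX (TensorProduct.map LinearMap.id (LinearMap.mul' k H)
      (TensorProduct.tensorTensorTensorComm k Y H X H (t ⊗ₜ (rX' rX x)))) =
    TensorProduct.assoc k Y H X (t ⊗ₜ x) := by
  induction t using TensorProduct.induction_on with
  | zero => simp
  | tmul y' h =>
      rw [A1 y' h (rX' rX x), B2, B8 rX hXco hXcu h x]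
      simp
  | add t1 t2 ih1 ih2 => simp only [add_tmul, map_add, ih1, ih2]

lemma KEY2
    (hXco : TensorProduct.map LinearMap.id rX ∘ₗ rX =
      (TensorProduct.assoc k H H X).toLinearMap ∘ₗ
        TensorProduct.map (comul (R := k)) LinearMap.id ∘ₗ rX)
    (hXcu : (TensorProduct.lid k X).toLinearMap ∘ₗ
        TensorProduct.map (counit (R := k) (A := H)) LinearMap.id ∘ₗ rX = LinearMap.id) :
    Bm rX ∘ₗ rhoYX k H Y X rY rX =
      (TensorProduct.assoc k Y H X).toLinearMap ∘ₗ
        TensorProduct.map rY LinearMap.id := by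
  apply TensorProduct.ext'
  intro y x
  simp only [rhoYX, LinearMap.comp_apply, LinearEquiv.coe_coe]
  rw [show TensorProduct.map rY ((TensorProduct.comm k H X).toLinearMap ∘ₗ
        TensorProduct.map (HopfAlgebra.antipode (R := k) (A := H)) LinearMap.id ∘ₗ rX)
      (y ⊗ₜ x) = (rY y) ⊗ₜ (rX' rX x) from TensorProduct.map_tmul _ _ _ _]
  rw [B11 rX hXco hXcu x (rY y)]
  rw [show TensorProduct.map rY (LinearMap.id : X →ₗ[k] X) (y ⊗ₜ x) = (rY y) ⊗ₜ x from
    TensorProduct.map_tmul _ _ _ _]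

lemma B13 (s : H ⊗[k] X) :
    TensorProduct.map (LinearMap.mul' k H) LinearMap.id
      ((TensorProduct.assoc k H H X).symm ((1 : H) ⊗ₜ s)) = s := by
  induction s using TensorProduct.induction_on with
  | zero => simp
  | tmul a x' => simp
  | add s1 s2 ih1 ih2 => simp only [tmul_add, map_add, ih1, ih2]

lemma KEY3 :
    Bm (Y := Y) rX ∘ₗ (TensorProduct.mk k (Y ⊗[k] X) H).flip 1 =
      TensorProduct.map LinearMap.id rX := by
  apply TensorProduct.ext'
  intro y x
  simp only [LinearMap.comp_apply, LinearMap.flip_apply, TensorProduct.mk_apply,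
    Bm, gm, LinearEquiv.coe_coe]
  rw [TensorProduct.assoc_tmul]
  rw [show TensorProduct.map LinearMap.id
      (TensorProduct.map (LinearMap.mul' k H) LinearMap.id ∘ₗ
        (TensorProduct.assoc k H H X).symm.toLinearMap ∘ₗ
        TensorProduct.map LinearMap.id rX ∘ₗ (TensorProduct.comm k X H).toLinearMap)
      (y ⊗ₜ (x ⊗ₜ 1) : Y ⊗[k] (X ⊗[k] H)) =
      y ⊗ₜ ((TensorProduct.map (LinearMap.mul' k H) LinearMap.id ∘ₗ
        (TensorProduct.assoc k H H X).symm.toLinearMap ∘ₗ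
        TensorProduct.map LinearMap.id rX ∘ₗ (TensorProduct.comm k X H).toLinearMap)
        (x ⊗ₜ 1)) from TensorProduct.map_tmul _ _ _ _]
  simp only [LinearMap.comp_apply, LinearEquiv.coe_coe, TensorProduct.comm_tmul]
  rw [show TensorProduct.map LinearMap.id rX ((1 : H) ⊗ₜ x) = (1 : H) ⊗ₜ rX x from
    TensorProduct.map_tmul _ _ _ _]
  rw [B13]
  exact (show TensorProduct.map (LinearMap.id : Y →ₗ[k] Y) rX (y ⊗ₜ x) = y ⊗ₜ rX x from
    TensorProduct.map_tmul _ _ _ _).symm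

end CotensorAux

open CotensorAux in
theorem cotensor_eq_invariants
    (rY : Y →ₗ[k] Y ⊗[k] H) (rX : X →ₗ[k] H ⊗[k] X)
    (hYco : (TensorProduct.assoc k Y H H).toLinearMap ∘ₗ
        TensorProduct.map rY LinearMap.id ∘ₗ rY =
      TensorProduct.map LinearMap.id (comul (R := k)) ∘ₗ rY)
    (hYcu : (TensorProduct.rid k Y).toLinearMap ∘ₗ
        TensorProduct.map LinearMap.id (counit (R := k) (A := H)) ∘ₗ rY = LinearMap.id)
    (hXco : TensorProduct.map LinearMap.id rX ∘ₗ rX =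
      (TensorProduct.assoc k H H X).toLinearMap ∘ₗ
        TensorProduct.map (comul (R := k)) LinearMap.id ∘ₗ rX)
    (hXcu : (TensorProduct.lid k X).toLinearMap ∘ₗ
        TensorProduct.map (counit (R := k) (A := H)) LinearMap.id ∘ₗ rX = LinearMap.id) :
    LinearMap.ker
        ((TensorProduct.assoc k Y H X).toLinearMap ∘ₗ
            TensorProduct.map rY LinearMap.id -
          TensorProduct.map LinearMap.id rX) =
      LinearMap.ker
        (rhoYX k H Y X rY rX - (TensorProduct.mk k (Y ⊗[k] X) H).flip 1) := by
  ext ξ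
  simp only [LinearMap.mem_ker, LinearMap.sub_apply, sub_eq_zero, LinearMap.comp_apply,
    LinearEquiv.coe_coe, LinearMap.flip_apply, TensorProduct.mk_apply]
  constructor
  · intro h
    have h2 : TensorProduct.map rY (LinearMap.id : X →ₗ[k] X) ξ =
        (TensorProduct.assoc k Y H X).symm (TensorProduct.map LinearMap.id rX ξ) := by
      rw [← h, LinearEquiv.symm_apply_apply]
    have hdec : rhoYX k H Y X rY rX ξ =
        TensorProduct.map LinearMap.id (LinearMap.mul' k H)
          ((TensorProduct.tensorTensorTensorComm k Y H X H)
            (TensorProduct.map LinearMap.id (rX' rX)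
              (TensorProduct.map rY LinearMap.id ξ))) := by
      have : TensorProduct.map rY (rX' rX) =
          TensorProduct.map LinearMap.id (rX' rX) ∘ₗ
            TensorProduct.map rY LinearMap.id := by
        rw [← TensorProduct.map_comp, LinearMap.id_comp, LinearMap.comp_id]
      simp only [rhoYX, LinearMap.comp_apply, LinearEquiv.coe_coe]
      rw [show ((TensorProduct.comm k H X).toLinearMap ∘ₗ
          TensorProduct.map (HopfAlgebra.antipode (R := k) (A := H)) LinearMap.id ∘ₗ rX)
          = rX' rX from rfl, this]
      rfl
    rw [hdec, h2]
    have := LinearMap.congr_fun (KEY1 (Y := Y) rX hXco hXcu) ξ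
    simp only [LinearMap.comp_apply, LinearEquiv.coe_coe, LinearMap.flip_apply,
      TensorProduct.mk_apply] at this
    exact this
  · intro h
    have h1 := LinearMap.congr_fun (KEY2 rY rX hXco hXcu) ξ
    have h2 := LinearMap.congr_fun (KEY3 (Y := Y) rX) ξ
    simp only [LinearMap.comp_apply, LinearEquiv.coe_coe, LinearMap.flip_apply,
      TensorProduct.mk_apply] at h1 h2
    rw [← h1, h, h2]
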